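/- arXiv:1501.00362 — 2 statements merged into one kernel-verified Lean document; each statement's English description precedes it below -/
import Mathlib

section
/- Let (a_j)_{j=1}^n be positive reals and let ψ : ℝ≥0 → ℝ≥0 be increasing with ψ(0)=0 and t/ψ(t) non-decreasing on (0,∞). Let H₁ be a Hilbert space with orthonormal basis (e_j)_{j=1}^n, α > 0, and x = Σ_j x_j e_j. Then ‖Σ_j (α/(α + a_j²)) x_j e_j‖ ≤ ψ(α) · (Σ_j |x_j|²/ψ(a_j²)²)^{1/2}. -/
open Finset

theorem OrthonormalBasis.norm_sum_smul {ι H : Type*} [Fintype ι] [NormedAddCommGroup H]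
    [InnerProductSpace ℝ H] (e : OrthonormalBasis ι ℝ H) (c : ι → ℝ) :
    ‖∑ i, c i • e i‖ = √(∑ i, c i ^ 2) := by
  rw [show ∑ i, c i • e i = e.repr.symm (WithLp.toLp 2 c) from e.sum_repr_symm _,
    LinearIsometryEquiv.norm_map, EuclideanSpace.norm_eq]
  simp only [Real.norm_eq_abs, sq_abs]

/-- For `u ≤ α` use monotonicity of `ψ`; for `α ≤ u` the quotient condition gives
`ψ u ≤ (u / α) ψ α`, and `α / (α + u) · u / α ≤ 1`. -/
theorem tikhonov_filter_mul_le {ψ : ℝ → ℝ} (hψmono : MonotoneOn ψ (Set.Ici 0))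
    (hψpos : ∀ t : ℝ, 0 < t → 0 < ψ t)
    (hq : ∀ s t : ℝ, 0 < s → s ≤ t → s / ψ s ≤ t / ψ t)
    {α u : ℝ} (hα : 0 < α) (hu : 0 < u) :
    α / (α + u) * ψ u ≤ ψ α := by
  have hψα := hψpos α hα
  have hψu := hψpos u hu
  have hαu : 0 < α + u := by positivity
  rcases le_total u α with huα | hαu'
  · calc α / (α + u) * ψ u ≤ 1 * ψ α :=
          mul_le_mul ((div_le_one hαu).2 (by linarith)) (hψmono hu.le hα.le huα) hψu.le
            zero_le_one
      _ = ψ α := one_mul _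
  · have hψu_le : ψ u ≤ u / α * ψ α := by
      have := hq α u hα hαu'
      rw [div_le_div_iff₀ hψα hψu] at this
      rw [div_mul_eq_mul_div, le_div_iff₀ hα]
      linarith
    calc α / (α + u) * ψ u ≤ α / (α + u) * (u / α * ψ α) := by gcongr
      _ = u / (α + u) * ψ α := by field_simp
      _ ≤ 1 * ψ α := by gcongr; exact (div_le_one hαu).2 (by linarith)
      _ = ψ α := one_mul _

theorem tikhonov_residual_source_bound_general {H : Type*} [NormedAddCommGroup H]
    [InnerProductSpace ℝ H] {n : ℕ} (e : OrthonormalBasis (Fin n) ℝ H)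
    (a : Fin n → ℝ) (ha : ∀ j, 0 < a j)
    (ψ : ℝ → ℝ) (hψmono : MonotoneOn ψ (Set.Ici 0))
    (hψpos : ∀ t : ℝ, 0 < t → 0 < ψ t)
    (hq : ∀ s t : ℝ, 0 < s → s ≤ t → s / ψ s ≤ t / ψ t)
    (α : ℝ) (hα : 0 < α) (x : Fin n → ℝ) :
    ‖∑ j, ((α / (α + (a j) ^ 2)) * x j) • e j‖ ≤
      ψ α * Real.sqrt (∑ j, (x j) ^ 2 / (ψ ((a j) ^ 2)) ^ 2) := by
  have hψα := (hψpos α hα).le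
  have termwise : ∀ j, (α / (α + a j ^ 2) * x j) ^ 2 ≤ ψ α ^ 2 * (x j ^ 2 / ψ (a j ^ 2) ^ 2) := by
    intro j
    have hu : 0 < a j ^ 2 := pow_pos (ha j) 2
    have hψu := hψpos _ hu
    have hfilter := tikhonov_filter_mul_le hψmono hψpos hq hα hu
    calc (α / (α + a j ^ 2) * x j) ^ 2
        = (α / (α + a j ^ 2) * ψ (a j ^ 2)) ^ 2 * (x j ^ 2 / ψ (a j ^ 2) ^ 2) := by
          field_simp
      _ ≤ ψ α ^ 2 * (x j ^ 2 / ψ (a j ^ 2) ^ 2) := by gcongr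
  rw [e.norm_sum_smul, ← Real.sqrt_sq hψα, ← Real.sqrt_mul (sq_nonneg _), mul_sum]
  exact Real.sqrt_le_sqrt (sum_le_sum fun j _ => termwise j)

theorem tikhonov_residual_source_bound {H : Type*} [NormedAddCommGroup H]
    [InnerProductSpace ℝ H] {n : ℕ} (e : OrthonormalBasis (Fin n) ℝ H)
    (a : Fin n → ℝ) (ha : ∀ j, 0 < a j)
    (ψ : ℝ → ℝ) (hψ0 : ψ 0 = 0) (hψmono : MonotoneOn ψ (Set.Ici 0))
    (hψpos : ∀ t : ℝ, 0 < t → 0 < ψ t)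
    (hq : ∀ s t : ℝ, 0 < s → s ≤ t → s / ψ s ≤ t / ψ t)
    (α : ℝ) (hα : 0 < α) (x : Fin n → ℝ) :
    ‖∑ j, ((α / (α + (a j) ^ 2)) * x j) • e j‖ ≤
      ψ α * Real.sqrt (∑ j, (x j) ^ 2 / (ψ ((a j) ^ 2)) ^ 2) :=
  tikhonov_residual_source_bound_general e a ha ψ hψmono hψpos hq α hα x
end

section
/- Let φ, ψ be increasing functions vanishing at 0 with t/φ(t) and t/ψ(t) non-decreasing, let (a_j), (β_j) be positive sequences, α, λ > 0, and x = Σ_j x_j e_j ∈ W^{φ,β} ∩ W^{ψ,a} (i.e. both weighted ℓ² norms finite). Then ‖Σ_j (1 − (1/(1+λβ_j²))·a_j²/(α+a_j²)) x_j e_j‖ ≤ ψ(α)·‖x‖_{W^{ψ,a}} + φ(λ)·‖x‖_{W^{φ,β}}. -/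
-- filter inequality: (α/(α+u)) ψ(u) ≤ ψ(α)
lemma filter_ineq (ψ : ℝ → ℝ) (hmono : MonotoneOn ψ (Set.Ici 0))
    (hpos : ∀ t : ℝ, 0 < t → 0 < ψ t)
    (hq : ∀ s t : ℝ, 0 < s → s ≤ t → s / ψ s ≤ t / ψ t)
    {α u : ℝ} (hα : 0 < α) (hu : 0 < u) :
    α / (α + u) * ψ u ≤ ψ α := by
  have hψα := hpos α hα
  have hψu := hpos u hu
  rcases le_total u α with h | h
  · have h1 : ψ u ≤ ψ α := hmono (le_of_lt hu) (le_of_lt hα) h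
    have h2 : α / (α + u) ≤ 1 := by
      rw [div_le_one (by linarith)]; linarith
    calc α / (α + u) * ψ u ≤ 1 * ψ α := by
          apply mul_le_mul h2 h1 (le_of_lt hψu) zero_le_one
      _ = ψ α := one_mul _
  · have h1 : α / ψ α ≤ u / ψ u := hq α u hα h
    have h2 : α * ψ u ≤ u * ψ α := by
      rw [div_le_div_iff₀ hψα hψu] at h1; linarith
    have h3 : α / (α + u) * ψ u ≤ α / u * ψ u := by
      apply mul_le_mul_of_nonneg_right _ (le_of_lt hψu)
      apply div_le_div_of_nonneg_left (le_of_lt hα) hu (by linarith)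
    calc α / (α + u) * ψ u ≤ α / u * ψ u := h3
      _ = α * ψ u / u := by ring
      _ ≤ u * ψ α / u := by apply div_le_div_of_nonneg_right h2 hu.le
      _ = ψ α := by field_simp

lemma norm_sum_eq {H : Type*} [NormedAddCommGroup H] [InnerProductSpace ℝ H]
    {n : ℕ} (e : OrthonormalBasis (Fin n) ℝ H) (c : Fin n → ℝ) :
    ‖∑ j, c j • e j‖ = Real.sqrt (∑ j, (c j) ^ 2) := by
  have h : e.repr (∑ j, c j • e j) = fun j => c j := by
    funext i
    simp only [map_sum, map_smul, e.repr_self]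
    rw [WithLp.ofLp_sum, Finset.sum_apply]
    simp [EuclideanSpace.single_apply]
  rw [← e.repr.norm_map, EuclideanSpace.norm_eq, h]
  congr 1
  apply Finset.sum_congr rfl
  intro j _
  rw [Real.norm_eq_abs, sq_abs]

lemma norm_bound {H : Type*} [NormedAddCommGroup H] [InnerProductSpace ℝ H]
    {n : ℕ} (e : OrthonormalBasis (Fin n) ℝ H) (c D : Fin n → ℝ)
    (h : ∀ j, (c j) ^ 2 ≤ D j) :
    ‖∑ j, c j • e j‖ ≤ Real.sqrt (∑ j, D j) := by
  rw [norm_sum_eq]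
  exact Real.sqrt_le_sqrt (Finset.sum_le_sum fun j _ => h j)

set_option maxHeartbeats 2000000 in
theorem two_step_regularization_error {H : Type*} [NormedAddCommGroup H]
    [InnerProductSpace ℝ H] {n : ℕ} (e : OrthonormalBasis (Fin n) ℝ H)
    (a β : Fin n → ℝ) (ha : ∀ j, 0 < a j) (hβ : ∀ j, 0 < β j)
    (ψ φ : ℝ → ℝ)
    (hψ0 : ψ 0 = 0) (hψmono : MonotoneOn ψ (Set.Ici 0))
    (hψpos : ∀ t : ℝ, 0 < t → 0 < ψ t)
    (hqψ : ∀ s t : ℝ, 0 < s → s ≤ t → s / ψ s ≤ t / ψ t)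
    (hφ0 : φ 0 = 0) (hφmono : MonotoneOn φ (Set.Ici 0))
    (hφpos : ∀ t : ℝ, 0 < t → 0 < φ t)
    (hqφ : ∀ s t : ℝ, 0 < s → s ≤ t → s / φ s ≤ t / φ t)
    (α lam : ℝ) (hα : 0 < α) (hlam : 0 < lam) (x : Fin n → ℝ) :
    ‖∑ j, ((1 - (a j) ^ 2 / ((α + (a j) ^ 2) * (1 + lam * (β j) ^ 2))) * x j) • e j‖ ≤
      ψ α * Real.sqrt (∑ j, (x j) ^ 2 / (ψ ((a j) ^ 2)) ^ 2) +
      φ lam * Real.sqrt (∑ j, (x j) ^ 2 / (φ (((β j) ^ 2)⁻¹)) ^ 2) := by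
  have ha2 : ∀ j, (0:ℝ) < (a j) ^ 2 := fun j => pow_pos (ha j) 2
  have hβ2 : ∀ j, (0:ℝ) < (β j) ^ 2 := fun j => pow_pos (hβ j) 2
  set A : Fin n → ℝ := fun j => α / (α + (a j) ^ 2) * x j with hA
  set B : Fin n → ℝ := fun j =>
    (a j) ^ 2 / (α + (a j) ^ 2) * (lam * (β j) ^ 2 / (1 + lam * (β j) ^ 2)) * x j with hB
  have hsplit : ∀ j, (1 - (a j) ^ 2 / ((α + (a j) ^ 2) * (1 + lam * (β j) ^ 2))) * x j
      = A j + B j := by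
    intro j
    have h1 : (0:ℝ) < α + (a j) ^ 2 := by have := ha2 j; linarith
    have h2 : (0:ℝ) < 1 + lam * (β j) ^ 2 := by positivity
    simp only [hA, hB]
    field_simp
    ring
  have hψα := hψpos α hα
  have hphl := hφpos lam hlam
  calc ‖∑ j, ((1 - (a j) ^ 2 / ((α + (a j) ^ 2) * (1 + lam * (β j) ^ 2))) * x j) • e j‖
      = ‖(∑ j, A j • e j) + ∑ j, B j • e j‖ := by
        rw [← Finset.sum_add_distrib]
        congr 1
        apply Finset.sum_congr rfl
        intro j _
        rw [hsplit j, add_smul]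
    _ ≤ ‖∑ j, A j • e j‖ + ‖∑ j, B j • e j‖ := norm_add_le _ _
    _ ≤ Real.sqrt (∑ j, ψ α ^ 2 * ((x j) ^ 2 / (ψ ((a j) ^ 2)) ^ 2)) +
        Real.sqrt (∑ j, φ lam ^ 2 * ((x j) ^ 2 / (φ (((β j) ^ 2)⁻¹)) ^ 2)) := by
        apply add_le_add
        · apply norm_bound e A (fun j => ψ α ^ 2 * ((x j) ^ 2 / (ψ ((a j) ^ 2)) ^ 2))
          intro j
          have key : α / (α + (a j) ^ 2) * ψ ((a j) ^ 2) ≤ ψ α :=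
            filter_ineq ψ hψmono hψpos hqψ hα (ha2 j)
          have hψu := hψpos _ (ha2 j)
          have h1 : α / (α + (a j) ^ 2) ≤ ψ α / ψ ((a j) ^ 2) := by
            rw [le_div_iff₀ hψu]; exact key
          have h0 : (0:ℝ) ≤ α / (α + (a j) ^ 2) := by positivity
          have hAj : (A j) ^ 2 = (α / (α + (a j) ^ 2))^2 * (x j)^2 := by
            simp only [hA]; ring
          rw [hAj]
          calc (α / (α + (a j) ^ 2))^2 * (x j)^2
              ≤ (ψ α / ψ ((a j) ^ 2))^2 * (x j)^2 := by
                exact mul_le_mul_of_nonneg_right (pow_le_pow_left₀ h0 h1 2) (sq_nonneg _)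
            _ = ψ α ^ 2 * ((x j) ^ 2 / (ψ ((a j) ^ 2)) ^ 2) := by ring
        · apply norm_bound e B (fun j => φ lam ^ 2 * ((x j) ^ 2 / (φ (((β j) ^ 2)⁻¹)) ^ 2))
          intro j
          have hb2 := hβ2 j
          have heq : lam * (β j) ^ 2 / (1 + lam * (β j) ^ 2)
              = lam / (lam + ((β j) ^ 2)⁻¹) := by
            rw [div_eq_div_iff (by positivity) (by positivity)]
            field_simp
            rw [mul_add, mul_one_div_cancel hb2.ne']; ring
          have key : lam / (lam + ((β j) ^ 2)⁻¹) * φ (((β j) ^ 2)⁻¹) ≤ φ lam :=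
            filter_ineq φ hφmono hφpos hqφ hlam (by positivity)
          have hφu := hφpos _ (show (0:ℝ) < ((β j)^2)⁻¹ by positivity)
          have h1 : lam / (lam + ((β j) ^ 2)⁻¹) ≤ φ lam / φ (((β j) ^ 2)⁻¹) := by
            rw [le_div_iff₀ hφu]; exact key
          have hfac : (0:ℝ) ≤ (a j)^2 / (α + (a j)^2) := by positivity
          have hfac1 : (a j)^2 / (α + (a j)^2) ≤ 1 := by
            rw [div_le_one (by have := ha2 j; linarith)]; linarith
          have h2 : (a j) ^ 2 / (α + (a j) ^ 2) * (lam * (β j) ^ 2 / (1 + lam * (β j) ^ 2))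
              ≤ φ lam / φ (((β j) ^ 2)⁻¹) := by
            rw [heq]
            calc (a j) ^ 2 / (α + (a j) ^ 2) * (lam / (lam + ((β j) ^ 2)⁻¹))
                ≤ 1 * (lam / (lam + ((β j) ^ 2)⁻¹)) := by
                  apply mul_le_mul_of_nonneg_right hfac1 (by positivity)
              _ = lam / (lam + ((β j) ^ 2)⁻¹) := one_mul _
              _ ≤ φ lam / φ (((β j) ^ 2)⁻¹) := h1
          have h0 : (0:ℝ) ≤ (a j) ^ 2 / (α + (a j) ^ 2) * (lam * (β j) ^ 2 / (1 + lam * (β j) ^ 2)) := by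
            positivity
          have hBj : (B j) ^ 2 = ((a j) ^ 2 / (α + (a j) ^ 2) * (lam * (β j) ^ 2 / (1 + lam * (β j) ^ 2)))^2 * (x j)^2 := by
            simp only [hB]; ring
          rw [hBj]
          calc _ ≤ (φ lam / φ (((β j) ^ 2)⁻¹))^2 * (x j)^2 := by
                exact mul_le_mul_of_nonneg_right (pow_le_pow_left₀ h0 h2 2) (sq_nonneg _)
            _ = φ lam ^ 2 * ((x j) ^ 2 / (φ (((β j) ^ 2)⁻¹)) ^ 2) := by ring
    _ = ψ α * Real.sqrt (∑ j, (x j) ^ 2 / (ψ ((a j) ^ 2)) ^ 2) +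
        φ lam * Real.sqrt (∑ j, (x j) ^ 2 / (φ (((β j) ^ 2)⁻¹)) ^ 2) := by
        rw [← Finset.mul_sum, ← Finset.mul_sum,
          Real.sqrt_mul (sq_nonneg _), Real.sqrt_mul (sq_nonneg _),
          Real.sqrt_sq (le_of_lt hψα), Real.sqrt_sq (le_of_lt hphl)]
end
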